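/- Rewrite/rewrite β-reduction (BetaRR): if Γ, x:A ⊢ ρ : s₀ → s₁ : B and Γ ⊢ σ : t₀ → t₁ : A, then (λx.ρ) σ ≈ ρ⟦x\σ⟧, i.e. the application of the abstraction congruence λx.ρ to σ is permutation equivalent to the rewrite/rewrite substitution of σ for x in ρ. -/
import Mathlib


namespace HOR

/-- Simple types over a set of base types `B`. -/
inductive Ty (B : Type) : Type
  | base : B → Ty B
  | arrow : Ty B → Ty B → Ty B

/-- Simply-typed λ-terms (de Bruijn representation) over a set of constants `C`. -/
inductive Tm (B C : Type) : Type
  | var : ℕ → Tm B C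
  | const : C → Tm B C
  | lam : Tm B C → Tm B C
  | app : Tm B C → Tm B C → Tm B C

variable {B C R : Type}

namespace Tm

/-- Shift the free variables with index `≥ c` up by `d`. -/
def shift (d : ℕ) : ℕ → Tm B C → Tm B C
  | c, .var n => if n < c then .var n else .var (n + d)
  | _, .const k => .const k
  | c, .lam t => .lam (shift d (c+1) t)
  | c, .app t u => .app (shift d c t) (shift d c u)

/-- Capture-avoiding substitution of the term `u` for the variable `k`. -/
def subst : Tm B C → ℕ → Tm B C → Tm B C
  | .var n, k, u => if n = k then shift k 0 u else if k < n then .var (n-1) else .var n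
  | .const c, _, _ => .const c
  | .lam t, k, u => .lam (subst t (k+1) u)
  | .app t s, k, u => .app (subst t k u) (subst s k u)

/-- Iterated abstraction `λⁿ.t`. -/
def lamN : ℕ → Tm B C → Tm B C
  | 0, t => t
  | n+1, t => .lam (lamN n t)

/-- Iterated application `t u₁ ⋯ uₙ`. -/
def apps : Tm B C → List (Tm B C) → Tm B C
  | t, [] => t
  | t, u :: us => apps (.app t u) us

/-- Parallel (simultaneous) substitution. -/
def psubst : (ℕ → Tm B C) → Tm B C → Tm B C
  | σ, .var n => σ n
  | _, .const c => .const c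
  | σ, .lam t => .lam (psubst (fun n => match n with | 0 => .var 0 | m+1 => shift 1 0 (σ m)) t)
  | σ, .app t u => .app (psubst σ t) (psubst σ u)

/-- Number of free occurrences of variable `k`. -/
def varCount : Tm B C → ℕ → ℕ
  | .var n, k => if n = k then 1 else 0
  | .const _, _ => 0
  | .lam t, k => varCount t (k+1)
  | .app t u, k => varCount t k + varCount u k

/-- Head of a term (spine head). -/
def head : Tm B C → Tm B C
  | .app t _ => head t
  | t => t

end Tm

/-- One-step β- or η-reduction, closed under arbitrary contexts. -/
inductive BetaEtaStep : Tm B C → Tm B C → Prop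
  | beta : BetaEtaStep (.app (.lam t) u) (t.subst 0 u)
  | eta : BetaEtaStep (.lam (.app (Tm.shift 1 0 t) (.var 0))) t
  | lam : BetaEtaStep t t' → BetaEtaStep (.lam t) (.lam t')
  | appL : BetaEtaStep t t' → BetaEtaStep (.app t u) (.app t' u)
  | appR : BetaEtaStep u u' → BetaEtaStep (.app t u) (.app t u')

/-- βη-equivalence of terms (the equivalence closure of one-step βη-reduction). -/
def BetaEtaEq : Tm B C → Tm B C → Prop :=
  Relation.ReflTransGen (fun a b => BetaEtaStep a b ∨ BetaEtaStep b a)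

/-- Typing of terms (simply-typed λ-calculus over a signature `sig`). -/
inductive TmTy (sig : C → Ty B) : List (Ty B) → Tm B C → Ty B → Prop
  | var : Γ[n]? = some A → TmTy sig Γ (.var n) A
  | const : TmTy sig Γ (.const c) (sig c)
  | lam : TmTy sig (A :: Γ) t B' → TmTy sig Γ (.lam t) (.arrow A B')
  | app : TmTy sig Γ t (.arrow A B') → TmTy sig Γ u A → TmTy sig Γ (.app t u) B'

mutual
  /-- η-long β-normal (i.e. βη̄-normal) forms. -/
  inductive LongNF {B C : Type} (sig : C → Ty B) : List (Ty B) → Tm B C → Ty B → Prop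
    | lam : LongNF sig (A :: Γ) t B' → LongNF sig Γ (.lam t) (.arrow A B')
    | neutral : NeutralNF sig Γ t (.base b) → LongNF sig Γ t (.base b)
  /-- Neutral spines: a variable or constant applied to η-long β-normal arguments. -/
  inductive NeutralNF {B C : Type} (sig : C → Ty B) : List (Ty B) → Tm B C → Ty B → Prop
    | var : Γ[n]? = some A → NeutralNF sig Γ (.var n) A
    | const : NeutralNF sig Γ (.const c) (sig c)
    | app : NeutralNF sig Γ t (.arrow A B') → LongNF sig Γ u A → NeutralNF sig Γ (.app t u) B'
end

/-- `A = A₁ → ⋯ → Aₙ → β` for some base type `β`. -/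
def Ty.baseAfter : ℕ → Ty B → Prop
  | 0, A => ∃ b, A = Ty.base b
  | n+1, A => ∃ A₁ A₂, A = Ty.arrow A₁ A₂ ∧ Ty.baseAfter n A₂

/-- `t` is η-equivalent to the locally bound variable `i < b`. -/
def EtaBoundVar (b : ℕ) (t : Tm B C) (i : ℕ) : Prop :=
  i < b ∧ BetaEtaEq t (.var i)

/-- Pattern condition for the body of a left-hand side with `n` metavariables,
under `b` local binders: every occurrence of a metavariable is applied to
terms η-equivalent to pairwise distinct locally bound variables. -/
inductive PatternBody (n : ℕ) : ℕ → Tm B C → Prop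
  | lam : PatternBody n (b+1) t → PatternBody n b (.lam t)
  | rigidVar : i < b → (∀ u ∈ args, PatternBody n b u) →
      PatternBody n b (Tm.apps (.var i) args)
  | rigidConst : (∀ u ∈ args, PatternBody n b u) →
      PatternBody n b (Tm.apps (.const c) args)
  | flex : b ≤ m → m < b + n →
      (∃ is : List ℕ, is.Nodup ∧ List.Forall₂ (EtaBoundVar b) args is) →
      PatternBody n b (Tm.apps (.var m) args)

/-- A Higher-order Rewriting System: a signature together with a set of rules
`⟨ϱ, ℓ, r⟩` (indexed by the rule symbols `R`), stored in closed form
`λx₁…xₙ.ℓ`, `λx₁…xₙ.r`, where `ℓ, r` are βη̄-normal terms of the same base type,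
`ℓ` is a pattern that is not η-equivalent to a variable, and `fv(r) ⊆ fv(ℓ)`
(ensured by closedness of both sides over the same variables). -/
structure HRS (B C R : Type) where
  sig : C → Ty B
  nargs : R → ℕ
  lhsBody : R → Tm B C
  rhsBody : R → Tm B C
  ruleTy : R → Ty B
  rule_base : ∀ r, Ty.baseAfter (nargs r) (ruleTy r)
  lhs_nf : ∀ r, LongNF sig [] (Tm.lamN (nargs r) (lhsBody r)) (ruleTy r)
  rhs_nf : ∀ r, LongNF sig [] (Tm.lamN (nargs r) (rhsBody r)) (ruleTy r)
  lhs_pattern : ∀ r, PatternBody (nargs r) 0 (lhsBody r)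
  lhs_not_var : ∀ r i, ¬ BetaEtaEq (lhsBody r) (Tm.var i)

/-- The closed left-hand side `λx₁…xₙ.ℓ` of a rule. -/
def HRS.lhs (S : HRS B C R) (r : R) : Tm B C := Tm.lamN (S.nargs r) (S.lhsBody r)

/-- The closed right-hand side `λx₁…xₙ.r` of a rule. -/
def HRS.rhs (S : HRS B C R) (r : R) : Tm B C := Tm.lamN (S.nargs r) (S.rhsBody r)

/-- Left-linearity: every variable of the left-hand side occurs exactly once. -/
def LeftLinear (S : HRS B C R) : Prop :=
  ∀ r, ∀ i < S.nargs r, Tm.varCount (S.lhsBody r) i = 1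

/-- `u` occurs as a subterm under `k` binders. -/
inductive SubtermAt : Tm B C → ℕ → Tm B C → Prop
  | refl : SubtermAt t 0 t
  | lam : SubtermAt t k u → SubtermAt (.lam t) (k+1) u
  | appL : SubtermAt t k u → SubtermAt (.app t s) k u
  | appR : SubtermAt s k u → SubtermAt (.app t s) k u

/-- No critical pairs: no non-variable subterm of a left-hand side unifies
(modulo βη, renaming apart) with a left-hand side, except trivially. -/
def NoCriticalPairs (S : HRS B C R) : Prop :=
  ∀ r₁ r₂ (k : ℕ) (u : Tm B C), SubtermAt (S.lhsBody r₁) k u →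
    ¬ (∃ m, Tm.head u = Tm.var m ∧ k ≤ m) →
    (∃ σ₁ σ₂ : ℕ → Tm B C, (∀ i < k, σ₁ i = .var i) ∧ (∀ i < k, σ₂ i = .var i) ∧
        BetaEtaEq (Tm.psubst σ₁ u) (Tm.psubst σ₂ (Tm.shift k 0 (S.lhsBody r₂)))) →
    (k = 0 ∧ u = S.lhsBody r₁ ∧ r₁ = r₂)

/-- An HRS is orthogonal when it is left-linear and has no critical pairs. -/
def Orthogonal (S : HRS B C R) : Prop := LeftLinear S ∧ NoCriticalPairs S

/-- The rewrite relation `→R` of an HRS on βη̄-normal terms: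
root steps `θℓ → θr` closed under abstraction and application congruence. -/
inductive RStep (S : HRS B C R) : List (Ty B) → Ty B → Tm B C → Tm B C → Prop
  | root : LongNF S.sig Γ s A → LongNF S.sig Γ t A →
      args.length = S.nargs r →
      BetaEtaEq (Tm.apps (S.lhs r) args) s → BetaEtaEq (Tm.apps (S.rhs r) args) t →
      RStep S Γ A s t
  | absC : RStep S (A :: Γ) B' s t → RStep S Γ (.arrow A B') (.lam s) (.lam t)
  | appL : RStep S Γ (.arrow A B') s t → TmTy S.sig Γ u A →
      RStep S Γ B' (.app s u) (.app t u)
  | appR : TmTy S.sig Γ s (.arrow A B') → RStep S Γ A u v →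
      RStep S Γ B' (.app s u) (.app s v)

/-- Typed βη-equivalence judgment `Γ ⊢ s ≐ t : A`. -/
inductive TmEq (sig : C → Ty B) : List (Ty B) → Tm B C → Tm B C → Ty B → Prop
  | beta : TmTy sig (A :: Γ) s B' → TmTy sig Γ t A →
      TmEq sig Γ (.app (.lam s) t) (s.subst 0 t) B'
  | eta : TmTy sig Γ s (.arrow A B') →
      TmEq sig Γ (.lam (.app (Tm.shift 1 0 s) (.var 0))) s (.arrow A B')
  | refl : TmTy sig Γ s A → TmEq sig Γ s s A
  | symm : TmEq sig Γ s t A → TmEq sig Γ t s A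
  | trans : TmEq sig Γ s t A → TmEq sig Γ t u A → TmEq sig Γ s u A
  | congAbs : TmEq sig (A :: Γ) s t B' → TmEq sig Γ (.lam s) (.lam t) (.arrow A B')
  | congApp : TmEq sig Γ s s' (.arrow A B') → TmEq sig Γ t t' A →
      TmEq sig Γ (.app s t) (.app s' t') B'

/-- Rewrites: variables, constants, rule symbols, abstraction and application
congruences, and composition `ρ;σ`. -/
inductive Rw (B C R : Type) : Type
  | var : ℕ → Rw B C R
  | const : C → Rw B C R
  | rule : R → Rw B C R
  | lam : Rw B C R → Rw B C R
  | app : Rw B C R → Rw B C R → Rw B C R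
  | comp : Rw B C R → Rw B C R → Rw B C R

namespace Rw

/-- The source term of a rewrite. -/
def src (S : HRS B C R) : Rw B C R → Tm B C
  | .var n => .var n
  | .const c => .const c
  | .rule r => S.lhs r
  | .lam ρ => .lam (src S ρ)
  | .app ρ σ => .app (src S ρ) (src S σ)
  | .comp ρ _ => src S ρ

/-- The target term of a rewrite. -/
def tgt (S : HRS B C R) : Rw B C R → Tm B C
  | .var n => .var n
  | .const c => .const c
  | .rule r => S.rhs r
  | .lam ρ => .lam (tgt S ρ)
  | .app ρ σ => .app (tgt S ρ) (tgt S σ)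
  | .comp _ σ => tgt S σ

/-- Shift the free variables with index `≥ c` up by `d`. -/
def shiftR (d : ℕ) : ℕ → Rw B C R → Rw B C R
  | c, .var n => if n < c then .var n else .var (n + d)
  | _, .const k => .const k
  | _, .rule r => .rule r
  | c, .lam ρ => .lam (shiftR d (c+1) ρ)
  | c, .app ρ σ => .app (shiftR d c ρ) (shiftR d c σ)
  | c, .comp ρ σ => .comp (shiftR d c ρ) (shiftR d c σ)

/-- Capture-avoiding substitution of the rewrite `ν` for the variable `k`.
When `ν` is (the coercion of) a term this is rewrite/term substitution `ρ{x\t}`,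
and when the rewrite being substituted into is (the coercion of) a term this is
term/rewrite substitution `s⟨x\ρ⟩`. -/
def substR : Rw B C R → ℕ → Rw B C R → Rw B C R
  | .var n, k, ν => if n = k then shiftR k 0 ν else if k < n then .var (n-1) else .var n
  | .const c, _, _ => .const c
  | .rule r, _, _ => .rule r
  | .lam ρ, k, ν => .lam (substR ρ (k+1) ν)
  | .app ρ σ, k, ν => .app (substR ρ k ν) (substR σ k ν)
  | .comp ρ σ, k, ν => .comp (substR ρ k ν) (substR σ k ν)

/-- Multisteps: rewrites with no occurrence of composition. -/
def IsMultistep : Rw B C R → Prop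
  | .lam ρ => IsMultistep ρ
  | .app ρ σ => IsMultistep ρ ∧ IsMultistep σ
  | .comp _ _ => False
  | _ => True

/-- Iterated abstraction. -/
def lamN : ℕ → Rw B C R → Rw B C R
  | 0, ρ => ρ
  | n+1, ρ => .lam (lamN n ρ)

/-- Iterated application. -/
def apps : Rw B C R → List (Rw B C R) → Rw B C R
  | ρ, [] => ρ
  | ρ, σ :: σs => apps (.app ρ σ) σs

end Rw

/-- Coercion of a term to the (unit/empty) rewrite it denotes. -/
def Tm.toRw : Tm B C → Rw B C R
  | .var n => .var n
  | .const c => .const c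
  | .lam t => .lam (toRw t)
  | .app t u => .app (toRw t) (toRw u)

/-- Higher-Order Rewriting Logic: `Γ ⊢ ρ : s → t : A`. -/
inductive RwTy (S : HRS B C R) : List (Ty B) → Rw B C R → Tm B C → Tm B C → Ty B → Prop
  | var : Γ[n]? = some A → RwTy S Γ (.var n) (.var n) (.var n) A
  | const : RwTy S Γ (.const c) (.const c) (.const c) (S.sig c)
  | rule : RwTy S Γ (.rule r) (S.lhs r) (S.rhs r) (S.ruleTy r)
  | abs : RwTy S (A :: Γ) ρ s t B' → RwTy S Γ (.lam ρ) (.lam s) (.lam t) (.arrow A B')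
  | app : RwTy S Γ ρ s₀ s₁ (.arrow A B') → RwTy S Γ σ t₀ t₁ A →
      RwTy S Γ (.app ρ σ) (.app s₀ t₀) (.app s₁ t₁) B'
  | comp : RwTy S Γ ρ s₀ s₁ A → RwTy S Γ σ s₁ s₂ A → RwTy S Γ (.comp ρ σ) s₀ s₂ A
  | conv : RwTy S Γ ρ s' t' A → TmEq S.sig Γ s s' A → TmEq S.sig Γ t' t A →
      RwTy S Γ ρ s t A

/-- A rewrite is well-typed (typable) if it has some typing judgment. -/
def WT (S : HRS B C R) (ρ : Rw B C R) : Prop := ∃ Γ s t A, RwTy S Γ ρ s t A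

/-- Permutation equivalence `ρ ≈ σ` of rewrites: the reflexive, symmetric,
transitive, contextual closure of the axioms IdL, IdR, Assoc, Abs, App,
BetaTR, BetaRT and Eta, each applying only between well-typed rewrites. -/
inductive PermEq (S : HRS B C R) : Rw B C R → Rw B C R → Prop
  | idL : WT S (.comp (Tm.toRw (Rw.src S ρ)) ρ) → WT S ρ →
      PermEq S (.comp (Tm.toRw (Rw.src S ρ)) ρ) ρ
  | idR : WT S (.comp ρ (Tm.toRw (Rw.tgt S ρ))) → WT S ρ →
      PermEq S (.comp ρ (Tm.toRw (Rw.tgt S ρ))) ρ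
  | assoc : WT S (.comp (.comp ρ σ) τ) → WT S (.comp ρ (.comp σ τ)) →
      PermEq S (.comp (.comp ρ σ) τ) (.comp ρ (.comp σ τ))
  | abs : WT S (.comp (.lam ρ) (.lam σ)) → WT S (.lam (.comp ρ σ)) →
      PermEq S (.comp (.lam ρ) (.lam σ)) (.lam (.comp ρ σ))
  | app : WT S (.comp (.app ρ₁ ρ₂) (.app σ₁ σ₂)) → WT S (.app (.comp ρ₁ σ₁) (.comp ρ₂ σ₂)) →
      PermEq S (.comp (.app ρ₁ ρ₂) (.app σ₁ σ₂)) (.app (.comp ρ₁ σ₁) (.comp ρ₂ σ₂))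
  | betaTR : WT S (.app (.lam (Tm.toRw s)) ρ) → WT S (Rw.substR (Tm.toRw s) 0 ρ) →
      PermEq S (.app (.lam (Tm.toRw s)) ρ) (Rw.substR (Tm.toRw s) 0 ρ)
  | betaRT : WT S (.app (.lam ρ) (Tm.toRw s)) → WT S (Rw.substR ρ 0 (Tm.toRw s)) →
      PermEq S (.app (.lam ρ) (Tm.toRw s)) (Rw.substR ρ 0 (Tm.toRw s))
  | eta : WT S (.lam (.app (Rw.shiftR 1 0 ρ) (.var 0))) → WT S ρ →
      PermEq S (.lam (.app (Rw.shiftR 1 0 ρ) (.var 0))) ρ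
  | refl : WT S ρ → PermEq S ρ ρ
  | symm : PermEq S ρ σ → PermEq S σ ρ
  | trans : PermEq S ρ σ → PermEq S σ τ → PermEq S ρ τ
  | congLam : PermEq S ρ ρ' → PermEq S (.lam ρ) (.lam ρ')
  | congAppL : PermEq S ρ ρ' → WT S σ → PermEq S (.app ρ σ) (.app ρ' σ)
  | congAppR : WT S ρ → PermEq S σ σ' → PermEq S (.app ρ σ) (.app ρ σ')
  | congCompL : PermEq S ρ ρ' → WT S σ → PermEq S (.comp ρ σ) (.comp ρ' σ)
  | congCompR : WT S ρ → PermEq S σ σ' → PermEq S (.comp ρ σ) (.comp ρ σ')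

/-- Rewrite/rewrite substitution `ρ⟦x\σ⟧ := ρ{x\src(σ)} ; tgt(ρ)⟨x\σ⟩`. -/
def substRR (S : HRS B C R) (ρ : Rw B C R) (k : ℕ) (σ : Rw B C R) : Rw B C R :=
  .comp (Rw.substR ρ k (Tm.toRw (Rw.src S σ))) (Rw.substR (Tm.toRw (Rw.tgt S ρ)) k σ)

/-- The rules of the flattening system `F`, closed under arbitrary contexts. -/
inductive FStepRaw (S : HRS B C R) : Rw B C R → Rw B C R → Prop
  | abs : FStepRaw S (.lam (.comp ρ σ)) (.comp (.lam ρ) (.lam σ))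
  | app1 : Rw.IsMultistep μ →
      FStepRaw S (.app (.comp ρ σ) μ) (.comp (.app ρ (Tm.toRw (Rw.src S μ))) (.app σ μ))
  | app2 : Rw.IsMultistep μ →
      FStepRaw S (.app μ (.comp ρ σ)) (.comp (.app μ ρ) (.app (Tm.toRw (Rw.tgt S μ)) σ))
  | app3 : FStepRaw S (.app (.comp ρ₁ ρ₂) (.comp σ₁ σ₂))
      (.comp (.app (.comp ρ₁ ρ₂) (Tm.toRw (Rw.src S σ₁)))
             (.app (Tm.toRw (Rw.tgt S ρ₂)) (.comp σ₁ σ₂)))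
  | betaM : Rw.IsMultistep μ → Rw.IsMultistep ν →
      FStepRaw S (.app (.lam μ) ν) (Rw.substR μ 0 ν)
  | etaM : Rw.IsMultistep μ →
      FStepRaw S (.lam (.app (Rw.shiftR 1 0 μ) (.var 0))) μ
  | congLam : FStepRaw S ρ ρ' → FStepRaw S (.lam ρ) (.lam ρ')
  | congAppL : FStepRaw S ρ ρ' → FStepRaw S (.app ρ σ) (.app ρ' σ)
  | congAppR : FStepRaw S σ σ' → FStepRaw S (.app ρ σ) (.app ρ σ')
  | congCompL : FStepRaw S ρ ρ' → FStepRaw S (.comp ρ σ) (.comp ρ' σ)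
  | congCompR : FStepRaw S σ σ' → FStepRaw S (.comp ρ σ) (.comp ρ σ')

/-- A flattening step `ρ ↦ σ` (the system `F` is defined between typable rewrites). -/
def FStep (S : HRS B C R) (ρ σ : Rw B C R) : Prop := FStepRaw S ρ σ ∧ WT S ρ

/-- `↦`-normal forms. -/
def FNormal (S : HRS B C R) (ρ : Rw B C R) : Prop := ∀ σ, ¬ FStep S ρ σ

/-- `ρ ↦* σ`. -/
def FStar (S : HRS B C R) : Rw B C R → Rw B C R → Prop := Relation.ReflTransGen (FStep S)

open Classical in
/-- `ρ♭`: the `↦`-normal form of `ρ` (when it exists; it is unique for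
typable rewrites by strong normalization and confluence of `F`). -/
noncomputable def flatten (S : HRS B C R) (ρ : Rw B C R) : Rw B C R :=
  if h : ∃ σ, FStar S ρ σ ∧ FNormal S σ then h.choose else ρ

/-- Splitting `μ ⋗ μ₁;μ₂` of a multistep. -/
inductive Split (S : HRS B C R) : Rw B C R → Rw B C R → Rw B C R → Prop
  | var : Split S (.var n) (.var n) (.var n)
  | const : Split S (.const c) (.const c) (.const c)
  | ruleL : Split S (.rule r) (.rule r) (Tm.toRw (S.rhs r))
  | ruleR : Split S (.rule r) (Tm.toRw (S.lhs r)) (.rule r)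
  | abs : Split S μ μ₁ μ₂ → Split S (.lam μ) (.lam μ₁) (.lam μ₂)
  | app : Split S μ μ₁ μ₂ → Split S ν ν₁ ν₂ →
      Split S (.app μ ν) (.app μ₁ ν₁) (.app μ₂ ν₂)

/-- Flat permutation equivalence `ρ ∼ σ` between `↦`-normal rewrites:
generated by associativity and the Perm axiom, closed under reflexivity,
symmetry, transitivity and composition contexts. -/
inductive FlatEq (S : HRS B C R) : Rw B C R → Rw B C R → Prop
  | assoc : FlatEq S (.comp (.comp ρ σ) τ) (.comp ρ (.comp σ τ))
  | perm : Rw.IsMultistep μ → FNormal S μ → Split S μ μ₁ μ₂ →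
      FlatEq S μ (.comp (flatten S μ₁) (flatten S μ₂))
  | refl : FlatEq S ρ ρ
  | symm : FlatEq S ρ σ → FlatEq S σ ρ
  | trans : FlatEq S ρ σ → FlatEq S σ τ → FlatEq S ρ τ
  | congCompL : FlatEq S ρ ρ' → FlatEq S (.comp ρ σ) (.comp ρ' σ)
  | congCompR : FlatEq S σ σ' → FlatEq S (.comp ρ σ) (.comp ρ σ')

/-- Weak projection `μ/ν ⇝ ξ` of coinitial multisteps. -/
inductive WProj (S : HRS B C R) : Rw B C R → Rw B C R → Rw B C R → Prop
  | var : WProj S (.var n) (.var n) (.var n)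
  | const : WProj S (.const c) (.const c) (.const c)
  | rule : WProj S (.rule r) (.rule r) (Tm.toRw (S.rhs r))
  | ruleL : WProj S (.rule r) (Tm.toRw (S.lhs r)) (.rule r)
  | ruleR : WProj S (Tm.toRw (S.lhs r)) (.rule r) (Tm.toRw (S.rhs r))
  | abs : WProj S μ ν ξ → WProj S (.lam μ) (.lam ν) (.lam ξ)
  | app : WProj S μ₁ ν₁ ξ₁ → WProj S μ₂ ν₂ ξ₂ →
      WProj S (.app μ₁ μ₂) (.app ν₁ ν₂) (.app ξ₁ ξ₂)

/-- Compatibility of coinitial multisteps: both are η-expanded β-normal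
forms, except that heads may be sources of rules. -/
inductive Compat (S : HRS B C R) : Rw B C R → Rw B C R → Prop
  | cvar : ms.length = ns.length →
      (∀ (i : ℕ) (m n' : Rw B C R), ms[i]? = some m → ns[i]? = some n' → Compat S m n') →
      Compat S (Rw.lamN k (Rw.apps (.var v) ms)) (Rw.lamN k (Rw.apps (.var v) ns))
  | ccon : ms.length = ns.length →
      (∀ (i : ℕ) (m n' : Rw B C R), ms[i]? = some m → ns[i]? = some n' → Compat S m n') →
      Compat S (Rw.lamN k (Rw.apps (.const c) ms)) (Rw.lamN k (Rw.apps (.const c) ns))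
  | crule : ms.length = ns.length →
      (∀ (i : ℕ) (m n' : Rw B C R), ms[i]? = some m → ns[i]? = some n' → Compat S m n') →
      Compat S (Rw.lamN k (Rw.apps (.rule r) ms)) (Rw.lamN k (Rw.apps (.rule r) ns))
  | cruleL : ms.length = ns.length →
      (∀ (i : ℕ) (m n' : Rw B C R), ms[i]? = some m → ns[i]? = some n' → Compat S m n') →
      Compat S (Rw.lamN k (Rw.apps (.rule r) ms)) (Rw.lamN k (Rw.apps (Tm.toRw (S.lhs r)) ns))
  | cruleR : ms.length = ns.length →
      (∀ (i : ℕ) (m n' : Rw B C R), ms[i]? = some m → ns[i]? = some n' → Compat S m n') →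
      Compat S (Rw.lamN k (Rw.apps (Tm.toRw (S.lhs r)) ms)) (Rw.lamN k (Rw.apps (.rule r) ns))

open Classical in
/-- The projection operator `μ/ν` for coinitial multisteps. -/
noncomputable def mproj (S : HRS B C R) (μ ν : Rw B C R) : Rw B C R :=
  if h : ∃ p : Rw B C R × Rw B C R × Rw B C R,
      flatten S p.1 = flatten S μ ∧ flatten S p.2.1 = flatten S ν ∧ WProj S p.1 p.2.1 p.2.2
  then flatten S h.choose.2.2 else μ

/-- Projection of a flat multistep over a coinitial flat rewrite. -/
noncomputable def proj1 (S : HRS B C R) : Rw B C R → Rw B C R → Rw B C R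
  | μ, .comp ρ₁ ρ₂ => proj1 S (proj1 S μ ρ₁) ρ₂
  | μ, ν => mproj S μ ν

/-- Projection of a flat rewrite over a coinitial flat multistep. -/
noncomputable def proj2 (S : HRS B C R) : Rw B C R → Rw B C R → Rw B C R
  | .comp ρ₁ ρ₂, μ => .comp (proj2 S ρ₁ μ) (proj2 S ρ₂ (proj1 S μ ρ₁))
  | ν, μ => mproj S ν μ

/-- Projection `ρ/σ` of a flat rewrite over a coinitial flat rewrite. -/
noncomputable def proj3 (S : HRS B C R) : Rw B C R → Rw B C R → Rw B C R
  | ρ, .comp σ₁ σ₂ => proj3 S (proj3 S ρ σ₁) σ₂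
  | ρ, μ => proj2 S ρ μ

/-- Projection `ρ ⫽ σ := ρ♭ / σ♭` for arbitrary coinitial rewrites. -/
noncomputable def aproj (S : HRS B C R) (ρ σ : Rw B C R) : Rw B C R :=
  proj3 S (flatten S ρ) (flatten S σ)

/-- Flat rewrites: compositions of `↦`-normal (flat) multisteps. -/
inductive IsFlat (S : HRS B C R) : Rw B C R → Prop
  | ms : Rw.IsMultistep μ → FNormal S μ → IsFlat S μ
  | comp : IsFlat S ρ → IsFlat S σ → IsFlat S (.comp ρ σ)

/-- The rewrite denoted by a sequential rewrite `μ₁;…;μₙ;s̄`. -/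
def seqToRw (p : List (Rw B C R) × Tm B C) : Rw B C R :=
  p.1.foldr Rw.comp (Tm.toRw p.2)

/-- Well-formedness of a sequential rewrite: all components are flat multisteps. -/
def SeqOK (S : HRS B C R) (p : List (Rw B C R) × Tm B C) : Prop :=
  (∀ μ ∈ p.1, Rw.IsMultistep μ ∧ FNormal S μ) ∧ FNormal S (Tm.toRw p.2)

/-- Empty multisteps: those containing no rule symbols, i.e. coerced terms. -/
def EmptyMs (μ : Rw B C R) : Prop := ∃ t : Tm B C, μ = Tm.toRw t

/-- The standardization relation `▷` on sequential rewrites. -/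
inductive Std (S : HRS B C R) : List (Rw B C R) × Tm B C → List (Rw B C R) × Tm B C → Prop
  | del : Std S (Tm.toRw t :: l, s) (l, s)
  | pull : FlatEq S μ₁₂ (.comp μ₁ μ₂) → FlatEq S μ₂₃ (.comp μ₂ μ₃) → ¬ EmptyMs μ₂ →
      Std S (μ₁ :: μ₂₃ :: l, s) (μ₁₂ :: μ₃ :: l, s)
  | cong : Std S (l, s) (l', s) → Std S (μ :: l, s) (μ :: l', s)

/-- Strong equivalence `ρ ≍ σ` of sequential rewrites: same length, same final
term, componentwise flat-permutation-equivalent multisteps. -/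
def StrongEq (S : HRS B C R) (p q : List (Rw B C R) × Tm B C) : Prop :=
  p.2 = q.2 ∧ List.Forall₂ (FlatEq S) p.1 q.1

/-- An unfolding of a multistep `μ`: a sequential rewrite of non-empty
multisteps flat-permutation-equivalent to `μ`. -/
def Unfolding (S : HRS B C R) (μ : Rw B C R) (p : List (Rw B C R) × Tm B C) : Prop :=
  SeqOK S p ∧ (∀ ν ∈ p.1, ¬ EmptyMs ν) ∧ FlatEq S μ (seqToRw p)

/-- The finiteness condition: the lengths of unfoldings of any multistep are bounded. -/
def FinCond (S : HRS B C R) : Prop :=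
  ∀ μ : Rw B C R, Rw.IsMultistep μ → WT S μ → ∃ N, ∀ p, Unfolding S μ p → p.1.length ≤ N

end HOR
namespace HOR
namespace Tm
variable {B C : Type}

theorem shift_var (d c n : ℕ) :
    shift d c (.var n : Tm B C) = if n < c then .var n else .var (n + d) := rfl

theorem subst_var (n k : ℕ) (u : Tm B C) :
    subst (.var n) k u = if n = k then shift k 0 u
      else if k < n then .var (n - 1) else .var n := rfl

theorem shift_shift_merge : ∀ (u : Tm B C) {d k c c'}, c' ≤ c → c ≤ c' + k →
    shift d c (shift k c' u) = shift (k + d) c' u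
  | .var n, d, k, c, c', h1, h2 => by
      simp only [shift_var, apply_ite (shift d c), shift_var]
      split_ifs <;> first | rfl | (exfalso; omega) | (simp only [Tm.var.injEq]; omega)
  | .const _, _, _, _, _, _, _ => rfl
  | .lam t, d, k, c, c', h1, h2 => by
      simp only [shift]; rw [shift_shift_merge t (by omega) (by omega)]
  | .app t u, d, k, c, c', h1, h2 => by
      simp only [shift]; rw [shift_shift_merge t h1 h2, shift_shift_merge u h1 h2]

theorem shift_shift_comm : ∀ (u : Tm B C) {d k c c'}, c' ≤ c →
    shift d (c + k) (shift k c' u) = shift k c' (shift d c u)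
  | .var n, d, k, c, c', h1 => by
      simp only [shift_var, apply_ite (shift d (c + k)), apply_ite (shift k c'), shift_var]
      split_ifs <;> first | rfl | (exfalso; omega) | (simp only [Tm.var.injEq]; omega)
  | .const _, _, _, _, _, _ => rfl
  | .lam t, d, k, c, c', h1 => by
      simp only [shift]
      have h : c + k + 1 = (c + 1) + k := by omega
      rw [h, shift_shift_comm t (by omega)]
  | .app t u, d, k, c, c', h1 => by
      simp only [shift]; rw [shift_shift_comm t h1, shift_shift_comm u h1]

theorem shift_subst : ∀ (s t : Tm B C) {d k c},
    shift d (k + c) (s.subst k t) = (shift d (k + c + 1) s).subst k (shift d c t)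
  | .var n, t, d, k, c => by
      simp only [subst_var, shift_var, apply_ite (shift d (k + c)),
        apply_ite (fun x : Tm B C => subst x k (shift d c t)), shift_var, subst_var]
      split_ifs <;>
        first
        | rfl | (exfalso; omega) | (simp only [Tm.var.injEq]; omega)
        | (rw [show k + c = c + k by omega]; exact shift_shift_comm t (by omega))
  | .const _, _, _, _, _ => rfl
  | .lam s, t, d, k, c => by
      simp only [subst, shift]
      have h : k + c + 1 = (k + 1) + c := by omega
      rw [h]
      exact congrArg Tm.lam (shift_subst s t)
  | .app s u, t, d, k, c => by
      simp only [subst, shift]; rw [shift_subst s t, shift_subst u t]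

theorem subst_shift : ∀ (t u : Tm B C) {d k c}, c ≤ k →
    (shift d c t).subst (k + d) u = shift d c (t.subst k u)
  | .var n, u, d, k, c, h => by
      simp only [subst_var, shift_var, apply_ite (fun x : Tm B C => subst x (k + d) u),
        apply_ite (shift d c), shift_var, subst_var]
      split_ifs <;>
        first
        | rfl | (exfalso; omega) | (simp only [Tm.var.injEq]; omega)
        | (exact shift_shift_merge u (by omega) (by omega))
        | (exact (shift_shift_merge u (by omega) (by omega)).symm)
  | .const _, _, _, _, _, _ => rfl
  | .lam t, u, d, k, c, h => by
      simp only [shift, subst]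
      have h1 : k + d + 1 = (k + 1) + d := by omega
      rw [h1]
      exact congrArg Tm.lam (subst_shift t u (by omega))
  | .app t s, u, d, k, c, h => by
      simp only [shift, subst]; rw [subst_shift t u h, subst_shift s u h]

theorem subst_shift_inside : ∀ (u w : Tm B C) {d j c}, c ≤ j → j < c + d →
    (shift d c u).subst j w = shift (d - 1) c u
  | .var n, w, d, j, c, h1, h2 => by
      simp only [shift_var, apply_ite (fun x : Tm B C => subst x j w), subst_var]
      split_ifs <;> first | rfl | (exfalso; omega) | (simp only [Tm.var.injEq]; omega)
  | .const _, _, _, _, _, _, _ => rfl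
  | .lam u, w, d, j, c, h1, h2 => by
      simp only [shift, subst]
      rw [subst_shift_inside u w (by omega) (by omega)]
  | .app u v, w, d, j, c, h1, h2 => by
      simp only [shift, subst]
      rw [subst_shift_inside u w h1 h2, subst_shift_inside v w h1 h2]

theorem subst_subst : ∀ (s t u : Tm B C) {j k}, j ≤ k →
    (s.subst j t).subst k u = (s.subst (k + 1) u).subst j (t.subst (k - j) u)
  | .var n, t, u, j, k, h => by
      simp only [subst_var, apply_ite (fun x : Tm B C => subst x k u),
        apply_ite (fun x : Tm B C => subst x j (t.subst (k - j) u)), subst_var]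
      split_ifs <;>
        first
        | rfl | (exfalso; omega) | (simp only [Tm.var.injEq]; omega)
        | (rw [show k = (k - j) + j by omega, subst_shift t u (by omega)]
           congr 2; omega)
        | (exact (subst_shift_inside u (t.subst (k - j) u) (d := k + 1) (c := 0)
            (by omega) (by omega)).symm)
  | .const _, _, _, _, _, _ => rfl
  | .lam s, t, u, j, k, h => by
      simp only [subst]
      rw [subst_subst s t u (by omega : j + 1 ≤ k + 1)]
      simp only [Nat.succ_sub_succ]
  | .app s v, t, u, j, k, h => by
      simp only [subst]; rw [subst_subst s t u h, subst_subst v t u h]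

end Tm
end HOR
namespace HOR
variable {B C R : Type} {sig : C → Ty B}

theorem TmTy.shift_id (h : TmTy sig Δ t A) : ∀ {c d : ℕ}, Δ.length ≤ c → Tm.shift d c t = t := by
  induction h with
  | @var Γ' n A' hn =>
      intro c d hc
      obtain ⟨hlt, -⟩ := List.getElem?_eq_some_iff.1 hn
      simp only [Tm.shift]
      rw [if_pos (show n < c by omega)]
  | const => intro c d hc; rfl
  | lam _ ih => intro c d hc; simp only [Tm.shift]; rw [ih (by simpa using Nat.succ_le_succ hc)]
  | app _ _ ih1 ih2 => intro c d hc; simp only [Tm.shift]; rw [ih1 hc, ih2 hc]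

theorem TmTy.subst_id (h : TmTy sig Δ t A) : ∀ {k : ℕ} {u : Tm B C}, Δ.length ≤ k →
    t.subst k u = t := by
  induction h with
  | @var Γ' n A' hn =>
      intro k u hk
      obtain ⟨hlt, -⟩ := List.getElem?_eq_some_iff.1 hn
      simp only [Tm.subst]
      rw [if_neg (show ¬ n = k by omega), if_neg (show ¬ k < n by omega)]
  | const => intro k u hk; rfl
  | lam _ ih => intro k u hk; simp only [Tm.subst]; rw [ih (Nat.succ_le_succ hk)]
  | app _ _ ih1 ih2 => intro k u hk; simp only [Tm.subst]; rw [ih1 hk, ih2 hk]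

theorem TmTy.shift' (h : TmTy sig Ξ t A) :
    ∀ {Γ₁ Δ Γ : List (Ty B)}, Ξ = Γ₁ ++ Γ →
      TmTy sig (Γ₁ ++ Δ ++ Γ) (Tm.shift Δ.length Γ₁.length t) A := by
  induction h with
  | @var Γ' n A hn =>
      intro Γ₁ Δ Γ hΞ
      subst hΞ
      simp only [Tm.shift]
      by_cases hlt : n < Γ₁.length
      · rw [if_pos hlt]
        refine .var ?_
        rw [List.getElem?_append, if_pos hlt] at hn
        rw [List.getElem?_append, if_pos (show n < (Γ₁ ++ Δ).length by simp; omega),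
          List.getElem?_append, if_pos hlt]
        exact hn
      · rw [if_neg hlt]
        refine .var ?_
        rw [List.getElem?_append, if_neg hlt] at hn
        rw [List.getElem?_append,
          if_neg (show ¬ n + Δ.length < (Γ₁ ++ Δ).length by simp; omega)]
        have he : n + Δ.length - (Γ₁ ++ Δ).length = n - Γ₁.length := by simp; omega
        rw [he]; exact hn
  | const => intro Γ₁ Δ Γ hΞ; exact .const
  | @lam Aa Γ' tt Bb _ ih =>
      intro Γ₁ Δ Γ hΞ
      exact .lam (ih (Γ₁ := Aa :: Γ₁) (by simp [hΞ]))
  | app _ _ ih1 ih2 =>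
      intro Γ₁ Δ Γ hΞ
      exact .app (ih1 hΞ) (ih2 hΞ)

end HOR
namespace HOR
variable {B C R : Type} {sig : C → Ty B}

theorem TmEq.shift' (h : TmEq sig Ξ s t A) :
    ∀ {Γ₁ Δ Γ : List (Ty B)}, Ξ = Γ₁ ++ Γ →
      TmEq sig (Γ₁ ++ Δ ++ Γ) (Tm.shift Δ.length Γ₁.length s)
        (Tm.shift Δ.length Γ₁.length t) A := by
  induction h with
  | @beta Aa Γ' ss Bb tt hs ht =>
      intro Γ₁ Δ Γ hΞ
      simp only [Tm.shift]
      have e := Tm.shift_subst (d := Δ.length) (k := 0) (c := Γ₁.length) ss tt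
      simp only [Nat.zero_add] at e
      rw [e]
      exact TmEq.beta (hs.shift' (Γ₁ := Aa :: Γ₁) (by simp [hΞ])) (ht.shift' hΞ)
  | @eta Γ' ss Aa Bb hs =>
      intro Γ₁ Δ Γ hΞ
      simp only [Tm.shift, if_pos (Nat.succ_pos _)]
      rw [Tm.shift_shift_comm ss (Nat.zero_le _)]
      exact TmEq.eta (hs.shift' hΞ)
  | refl hs => intro Γ₁ Δ Γ hΞ; exact TmEq.refl (hs.shift' hΞ)
  | symm _ ih => intro Γ₁ Δ Γ hΞ; exact (ih hΞ).symm
  | trans _ _ ih1 ih2 => intro Γ₁ Δ Γ hΞ; exact (ih1 hΞ).trans (ih2 hΞ)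
  | @congAbs Aa Γ' ss tt Bb _ ih =>
      intro Γ₁ Δ Γ hΞ
      exact TmEq.congAbs (ih (Γ₁ := Aa :: Γ₁) (by simp [hΞ]))
  | congApp _ _ ih1 ih2 =>
      intro Γ₁ Δ Γ hΞ
      exact TmEq.congApp (ih1 hΞ) (ih2 hΞ)

theorem TmTy.subst' (h : TmTy sig Ξ t Bt) :
    ∀ {Γ₁ Γ : List (Ty B)} {Ax : Ty B} {u : Tm B C}, Ξ = Γ₁ ++ Ax :: Γ →
      TmTy sig Γ u Ax → TmTy sig (Γ₁ ++ Γ) (t.subst Γ₁.length u) Bt := by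
  induction h with
  | @var Γ' n A hn =>
      intro Γ₁ Γ Ax u hΞ hu
      subst hΞ
      simp only [Tm.subst]
      rcases Nat.lt_trichotomy n Γ₁.length with hlt | heq | hgt
      · rw [if_neg (by omega), if_neg (by omega)]
        refine .var ?_
        rw [List.getElem?_append, if_pos hlt] at hn
        rw [List.getElem?_append, if_pos hlt]
        exact hn
      · rw [if_pos heq]
        rw [List.getElem?_append, if_neg (by omega), heq, Nat.sub_self] at hn
        simp only [List.getElem?_cons_zero, Option.some.injEq] at hn
        subst hn
        exact hu.shift' (Γ₁ := []) (Δ := Γ₁) rfl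
      · rw [if_neg (by omega), if_pos hgt]
        refine .var ?_
        rw [List.getElem?_append, if_neg (by omega)] at hn
        rw [show n - Γ₁.length = (n - Γ₁.length - 1) + 1 by omega] at hn
        simp only [List.getElem?_cons_succ] at hn
        rw [List.getElem?_append, if_neg (by omega),
          show n - 1 - Γ₁.length = n - Γ₁.length - 1 by omega]
        exact hn
  | const => intro Γ₁ Γ Ax u hΞ hu; exact .const
  | @lam Aa Γ' tt Bb _ ih =>
      intro Γ₁ Γ Ax u hΞ hu
      exact .lam (ih (Γ₁ := Aa :: Γ₁) (by simp [hΞ]) hu)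
  | app _ _ ih1 ih2 =>
      intro Γ₁ Γ Ax u hΞ hu
      exact .app (ih1 hΞ hu) (ih2 hΞ hu)

theorem TmEq.subst' (h : TmEq sig Ξ s t Bt) :
    ∀ {Γ₁ Γ : List (Ty B)} {Ax : Ty B} {u : Tm B C}, Ξ = Γ₁ ++ Ax :: Γ →
      TmTy sig Γ u Ax →
      TmEq sig (Γ₁ ++ Γ) (s.subst Γ₁.length u) (t.subst Γ₁.length u) Bt := by
  induction h with
  | @beta Aa Γ' ss Bb tt hs ht =>
      intro Γ₁ Γ Ax u hΞ hu
      simp only [Tm.subst]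
      rw [Tm.subst_subst ss tt u (Nat.zero_le _), Nat.sub_zero]
      exact TmEq.beta (hs.subst' (Γ₁ := Aa :: Γ₁) (by simp [hΞ]) hu) (ht.subst' hΞ hu)
  | @eta Γ' ss Aa Bb hs =>
      intro Γ₁ Γ Ax u hΞ hu
      simp only [Tm.subst]
      rw [if_neg (show ¬ (0 : ℕ) = Γ₁.length + 1 by omega),
        if_neg (show ¬ Γ₁.length + 1 < 0 by omega),
        Tm.subst_shift ss u (Nat.zero_le _)]
      exact TmEq.eta (hs.subst' hΞ hu)
  | refl hs => intro Γ₁ Γ Ax u hΞ hu; exact TmEq.refl (hs.subst' hΞ hu)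
  | symm _ ih => intro Γ₁ Γ Ax u hΞ hu; exact (ih hΞ hu).symm
  | trans _ _ ih1 ih2 => intro Γ₁ Γ Ax u hΞ hu; exact (ih1 hΞ hu).trans (ih2 hΞ hu)
  | @congAbs Aa Γ' ss tt Bb _ ih =>
      intro Γ₁ Γ Ax u hΞ hu
      exact TmEq.congAbs (ih (Γ₁ := Aa :: Γ₁) (by simp [hΞ]) hu)
  | congApp _ _ ih1 ih2 =>
      intro Γ₁ Γ Ax u hΞ hu
      exact TmEq.congApp (ih1 hΞ hu) (ih2 hΞ hu)

end HOR
namespace HOR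
variable {B C R : Type} {sig : C → Ty B} {S : HRS B C R}

theorem longNF_tmTy {Γ} {t : Tm B C} {A} (h : LongNF sig Γ t A) : TmTy sig Γ t A :=
  LongNF.rec (motive_1 := fun Γ t A _ => TmTy sig Γ t A)
    (motive_2 := fun Γ t A _ => TmTy sig Γ t A)
    (fun _ ih => .lam ih) (fun _ ih => ih) (fun hn => .var hn) .const
    (fun _ _ ih1 ih2 => .app ih1 ih2) h

theorem lhs_tmTy (S : HRS B C R) (r : R) : TmTy S.sig [] (S.lhs r) (S.ruleTy r) :=
  longNF_tmTy (S.lhs_nf r)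

theorem rhs_tmTy (S : HRS B C R) (r : R) : TmTy S.sig [] (S.rhs r) (S.ruleTy r) :=
  longNF_tmTy (S.rhs_nf r)

theorem shiftR_toRw : ∀ (t : Tm B C) (d c : ℕ),
    Rw.shiftR d c (Tm.toRw t : Rw B C R) = Tm.toRw (Tm.shift d c t)
  | .var n, d, c => by
      by_cases h : n < c <;> simp [Tm.toRw, Rw.shiftR, Tm.shift, h]
  | .const k, d, c => rfl
  | .lam t, d, c => by simp only [Tm.toRw, Rw.shiftR, Tm.shift, shiftR_toRw t]
  | .app t u, d, c => by
      simp only [Tm.toRw, Rw.shiftR, Tm.shift, shiftR_toRw t, shiftR_toRw u]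

theorem toRw_rwTy (h : TmTy S.sig Γ t A) : RwTy S Γ (Tm.toRw t) t t A := by
  induction h with
  | var hn => exact .var hn
  | const => exact .const
  | lam _ ih => exact .abs ih
  | app _ _ ih1 ih2 => exact .app ih1 ih2

theorem tmTy_closed (h : TmTy sig [] t A) (Γ : List (Ty B)) : TmTy sig Γ t A := by
  have h2 := h.shift' (Γ₁ := []) (Δ := Γ) (Γ := []) rfl
  rwa [List.length_nil, h.shift_id (Nat.le_refl 0), List.nil_append, List.append_nil] at h2

theorem rwTy_shift' (h : RwTy S Ξ ρ s t A) :
    ∀ {Γ₁ Δ Γ : List (Ty B)}, Ξ = Γ₁ ++ Γ →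
      RwTy S (Γ₁ ++ Δ ++ Γ) (Rw.shiftR Δ.length Γ₁.length ρ)
        (Tm.shift Δ.length Γ₁.length s) (Tm.shift Δ.length Γ₁.length t) A := by
  induction h with
  | @var Γ' n A' hn =>
      intro Γ₁ Δ Γ hΞ
      subst hΞ
      simp only [Rw.shiftR, Tm.shift]
      by_cases hlt : n < Γ₁.length
      · simp only [if_pos hlt]
        refine .var ?_
        rw [List.getElem?_append, if_pos hlt] at hn
        rw [List.getElem?_append, if_pos (show n < (Γ₁ ++ Δ).length by simp; omega),
          List.getElem?_append, if_pos hlt]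
        exact hn
      · simp only [if_neg hlt]
        refine .var ?_
        rw [List.getElem?_append, if_neg hlt] at hn
        rw [List.getElem?_append,
          if_neg (show ¬ n + Δ.length < (Γ₁ ++ Δ).length by simp; omega)]
        have he : n + Δ.length - (Γ₁ ++ Δ).length = n - Γ₁.length := by simp; omega
        rw [he]; exact hn
  | const => intro Γ₁ Δ Γ hΞ; exact .const
  | @rule Γ' r =>
      intro Γ₁ Δ Γ hΞ
      rw [(lhs_tmTy S r).shift_id (Nat.zero_le _), (rhs_tmTy S r).shift_id (Nat.zero_le _)]
      exact .rule
  | @abs A' Γ' ρ' s' t' B'' _ ih =>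
      intro Γ₁ Δ Γ hΞ
      exact .abs (ih (Γ₁ := A' :: Γ₁) (by simp [hΞ]))
  | app _ _ ih1 ih2 => intro Γ₁ Δ Γ hΞ; exact .app (ih1 hΞ) (ih2 hΞ)
  | comp _ _ ih1 ih2 => intro Γ₁ Δ Γ hΞ; exact .comp (ih1 hΞ) (ih2 hΞ)
  | conv _ he1 he2 ih =>
      intro Γ₁ Δ Γ hΞ
      subst hΞ
      exact .conv (ih rfl) (he1.shift' rfl) (he2.shift' rfl)

/-- Rewrite/term substitution preserves typing. -/
theorem substR_tm' (h : RwTy S Ξ ρ s t Bt) :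
    ∀ {Γ₁ Γ : List (Ty B)} {Ax : Ty B} {u : Tm B C}, Ξ = Γ₁ ++ Ax :: Γ →
      TmTy S.sig Γ u Ax →
      RwTy S (Γ₁ ++ Γ) (Rw.substR ρ Γ₁.length (Tm.toRw u))
        (s.subst Γ₁.length u) (t.subst Γ₁.length u) Bt := by
  induction h with
  | @var Γ' n A' hn =>
      intro Γ₁ Γ Ax u hΞ hu
      subst hΞ
      simp only [Rw.substR, Tm.subst]
      rcases Nat.lt_trichotomy n Γ₁.length with hlt | heq | hgt
      · simp only [if_neg (show ¬ n = Γ₁.length by omega),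
          if_neg (show ¬ Γ₁.length < n by omega)]
        refine .var ?_
        rw [List.getElem?_append, if_pos hlt] at hn
        rw [List.getElem?_append, if_pos hlt]
        exact hn
      · simp only [if_pos heq]
        rw [shiftR_toRw]
        rw [List.getElem?_append, if_neg (by omega), heq, Nat.sub_self] at hn
        simp only [List.getElem?_cons_zero, Option.some.injEq] at hn
        subst hn
        exact toRw_rwTy (hu.shift' (Γ₁ := []) (Δ := Γ₁) rfl)
      · simp only [if_neg (show ¬ n = Γ₁.length by omega), if_pos hgt]
        refine .var ?_
        rw [List.getElem?_append, if_neg (by omega)] at hn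
        rw [show n - Γ₁.length = (n - Γ₁.length - 1) + 1 by omega] at hn
        simp only [List.getElem?_cons_succ] at hn
        rw [List.getElem?_append, if_neg (by omega),
          show n - 1 - Γ₁.length = n - Γ₁.length - 1 by omega]
        exact hn
  | const => intro Γ₁ Γ Ax u hΞ hu; exact .const
  | @rule Γ' r =>
      intro Γ₁ Γ Ax u hΞ hu
      rw [(lhs_tmTy S r).subst_id (Nat.zero_le _), (rhs_tmTy S r).subst_id (Nat.zero_le _)]
      exact .rule
  | @abs A' Γ' ρ' s' t' B'' _ ih =>
      intro Γ₁ Γ Ax u hΞ hu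
      exact .abs (ih (Γ₁ := A' :: Γ₁) (by simp [hΞ]) hu)
  | app _ _ ih1 ih2 => intro Γ₁ Γ Ax u hΞ hu; exact .app (ih1 hΞ hu) (ih2 hΞ hu)
  | comp _ _ ih1 ih2 => intro Γ₁ Γ Ax u hΞ hu; exact .comp (ih1 hΞ hu) (ih2 hΞ hu)
  | conv _ he1 he2 ih =>
      intro Γ₁ Γ Ax u hΞ hu
      subst hΞ
      exact .conv (ih rfl hu) (he1.subst' rfl hu) (he2.subst' rfl hu)

/-- Term/rewrite substitution preserves typing. -/
theorem substR_rw' (h : TmTy S.sig Ξ t' Bt) :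
    ∀ {Γ₁ Γ : List (Ty B)} {Ax : Ty B} {σ : Rw B C R} {u v : Tm B C},
      Ξ = Γ₁ ++ Ax :: Γ → RwTy S Γ σ u v Ax →
      RwTy S (Γ₁ ++ Γ) (Rw.substR (Tm.toRw t') Γ₁.length σ)
        (t'.subst Γ₁.length u) (t'.subst Γ₁.length v) Bt := by
  induction h with
  | @var Γ' n A' hn =>
      intro Γ₁ Γ Ax σ u v hΞ hσ
      subst hΞ
      simp only [Tm.toRw, Rw.substR, Tm.subst]
      rcases Nat.lt_trichotomy n Γ₁.length with hlt | heq | hgt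
      · simp only [if_neg (show ¬ n = Γ₁.length by omega),
          if_neg (show ¬ Γ₁.length < n by omega)]
        refine .var ?_
        rw [List.getElem?_append, if_pos hlt] at hn
        rw [List.getElem?_append, if_pos hlt]
        exact hn
      · simp only [if_pos heq]
        rw [List.getElem?_append, if_neg (by omega), heq, Nat.sub_self] at hn
        simp only [List.getElem?_cons_zero, Option.some.injEq] at hn
        subst hn
        exact rwTy_shift' hσ (Γ₁ := []) (Δ := Γ₁) rfl
      · simp only [if_neg (show ¬ n = Γ₁.length by omega), if_pos hgt]
        refine .var ?_
        rw [List.getElem?_append, if_neg (by omega)] at hn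
        rw [show n - Γ₁.length = (n - Γ₁.length - 1) + 1 by omega] at hn
        simp only [List.getElem?_cons_succ] at hn
        rw [List.getElem?_append, if_neg (by omega),
          show n - 1 - Γ₁.length = n - Γ₁.length - 1 by omega]
        exact hn
  | const => intro Γ₁ Γ Ax σ u v hΞ hσ; exact .const
  | @lam A' Γ' tt B'' _ ih =>
      intro Γ₁ Γ Ax σ u v hΞ hσ
      exact .abs (ih (Γ₁ := A' :: Γ₁) (by simp [hΞ]) hσ)
  | app _ _ ih1 ih2 =>
      intro Γ₁ Γ Ax σ u v hΞ hσ
      exact .app (ih1 hΞ hσ) (ih2 hΞ hσ)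

/-- Source and target of a well-typed rewrite are well-typed and equivalent
to the endpoints of the judgment. -/
theorem rwTy_src_tgt (h : RwTy S Γ ρ s t A) :
    TmEq S.sig Γ s (Rw.src S ρ) A ∧ TmEq S.sig Γ t (Rw.tgt S ρ) A ∧
    TmTy S.sig Γ (Rw.src S ρ) A ∧ TmTy S.sig Γ (Rw.tgt S ρ) A := by
  induction h with
  | var hn => exact ⟨.refl (.var hn), .refl (.var hn), .var hn, .var hn⟩
  | const => exact ⟨.refl .const, .refl .const, .const, .const⟩
  | @rule Γ' r =>
      have hL := tmTy_closed (lhs_tmTy S r) Γ'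
      have hR := tmTy_closed (rhs_tmTy S r) Γ'
      exact ⟨.refl hL, .refl hR, hL, hR⟩
  | abs _ ih =>
      exact ⟨.congAbs ih.1, .congAbs ih.2.1, .lam ih.2.2.1, .lam ih.2.2.2⟩
  | app _ _ ih1 ih2 =>
      exact ⟨.congApp ih1.1 ih2.1, .congApp ih1.2.1 ih2.2.1,
        .app ih1.2.2.1 ih2.2.2.1, .app ih1.2.2.2 ih2.2.2.2⟩
  | comp _ _ ih1 ih2 =>
      exact ⟨ih1.1, ih2.2.1, ih1.2.2.1, ih2.2.2.2⟩
  | conv _ he1 he2 ih =>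
      exact ⟨he1.trans ih.1, (he2.symm).trans ih.2.1, ih.2.2.1, ih.2.2.2⟩
end HOR

open HOR in
/-- the rewrite/rewrite β-reduction rule (BetaRR):
`(λx.ρ) σ ≈ ρ⟦x\σ⟧`. -/
theorem statement10 {B C R : Type} (S : HRS B C R) (hOrth : Orthogonal S)
    {Γ : List (Ty B)} {A B' : Ty B} {ρ σ : Rw B C R} {s₀ s₁ t₀ t₁ : Tm B C}
    (hρ : RwTy S (A :: Γ) ρ s₀ s₁ B') (hσ : RwTy S Γ σ t₀ t₁ A) :
    PermEq S (.app (.lam ρ) σ) (substRR S ρ 0 σ) := by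
  obtain ⟨q1ρ, q2ρ, Tsρ, Ttρ⟩ := rwTy_src_tgt hρ
  obtain ⟨q1σ, q2σ, Tsσ, Ttσ⟩ := rwTy_src_tgt hσ
  have Rtgt : RwTy S (A :: Γ) (Tm.toRw (Rw.tgt S ρ)) s₁ s₁ B' :=
    .conv (toRw_rwTy Ttρ) q2ρ q2ρ.symm
  have Rsrc : RwTy S Γ (Tm.toRw (Rw.src S σ)) t₀ t₀ A :=
    .conv (toRw_rwTy Tsσ) q1σ q1σ.symm
  have hP : RwTy S Γ (.app (.lam ρ) (Tm.toRw (Rw.src S σ)))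
      (.app (.lam s₀) t₀) (.app (.lam s₁) t₀) B' := .app (.abs hρ) Rsrc
  have hQ : RwTy S Γ (.app (.lam (Tm.toRw (Rw.tgt S ρ))) σ)
      (.app (.lam s₁) t₀) (.app (.lam s₁) t₁) B' := .app (.abs Rtgt) hσ
  have hSub1 : RwTy S Γ (Rw.substR ρ 0 (Tm.toRw (Rw.src S σ)))
      (s₀.subst 0 (Rw.src S σ)) (s₁.subst 0 (Rw.src S σ)) B' :=
    substR_tm' hρ (Γ₁ := []) rfl Tsσ
  have hSub2 : RwTy S Γ (Rw.substR (Tm.toRw (Rw.tgt S ρ)) 0 σ)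
      ((Rw.tgt S ρ).subst 0 t₀) ((Rw.tgt S ρ).subst 0 t₁) B' :=
    substR_rw' Ttρ (Γ₁ := []) rfl hσ
  have e2b : PermEq S (.comp ρ (Tm.toRw (Rw.tgt S ρ))) ρ :=
    .idR ⟨_, _, _, _, .comp hρ Rtgt⟩ ⟨_, _, _, _, hρ⟩
  have e2 : PermEq S (.comp (.lam ρ) (.lam (Tm.toRw (Rw.tgt S ρ)))) (.lam ρ) :=
    .trans (.abs ⟨_, _, _, _, .comp (.abs hρ) (.abs Rtgt)⟩
        ⟨_, _, _, _, .abs (.comp hρ Rtgt)⟩)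
      (.congLam e2b)
  have e3 : PermEq S (.comp (Tm.toRw (Rw.src S σ)) σ) σ :=
    .idL ⟨_, _, _, _, .comp Rsrc hσ⟩ ⟨_, _, _, _, hσ⟩
  have e1 : PermEq S
      (.comp (.app (.lam ρ) (Tm.toRw (Rw.src S σ))) (.app (.lam (Tm.toRw (Rw.tgt S ρ))) σ))
      (.app (.comp (.lam ρ) (.lam (Tm.toRw (Rw.tgt S ρ)))) (.comp (Tm.toRw (Rw.src S σ)) σ)) :=
    .app ⟨_, _, _, _, .comp hP hQ⟩
      ⟨_, _, _, _, .app (.comp (.abs hρ) (.abs Rtgt)) (.comp Rsrc hσ)⟩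
  have e4 : PermEq S
      (.app (.comp (.lam ρ) (.lam (Tm.toRw (Rw.tgt S ρ)))) (.comp (Tm.toRw (Rw.src S σ)) σ))
      (.app (.lam ρ) σ) :=
    .trans (.congAppL e2 ⟨_, _, _, _, .comp Rsrc hσ⟩)
      (.congAppR ⟨_, _, _, _, .abs hρ⟩ e3)
  have eβ1 : PermEq S (.app (.lam ρ) (Tm.toRw (Rw.src S σ)))
      (Rw.substR ρ 0 (Tm.toRw (Rw.src S σ))) :=
    .betaRT ⟨_, _, _, _, hP⟩ ⟨_, _, _, _, hSub1⟩
  have eβ2 : PermEq S (.app (.lam (Tm.toRw (Rw.tgt S ρ))) σ)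
      (Rw.substR (Tm.toRw (Rw.tgt S ρ)) 0 σ) :=
    .betaTR ⟨_, _, _, _, hQ⟩ ⟨_, _, _, _, hSub2⟩
  exact .trans (.symm (.trans e1 e4))
    (.trans (.congCompL eβ1 ⟨_, _, _, _, hQ⟩) (.congCompR ⟨_, _, _, _, hSub1⟩ eβ2))
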